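/- arXiv:math/0605003 — 5 statements merged into one kernel-verified Lean document; each statement's English description precedes it below -/
import Mathlib

section
/- Let μ_{α,n} ∈ (0,1) be defined by the equation (1+μ_{α,n}²)/(2μ_{α,n}) = (3-ρ_{α,n})/(1+ρ_{α,n}) where ρ_{α,n} = cos(α/n). Then μ_{α,n} = 1 - α/n + O(n⁻²) as n → ∞, and consequently μ_{α,n}^{n/2} → exp(-α/2). -/
/-!
With `s = sin (α / 2n)` we have `cos (α / n) = 1 - 2 s²`, so the defining equation reads
`(1 + μ²) / (2μ) = (1 + s²) / (1 - s²)`, whose root in `(0, 1)` is `μ = (1 - s) / (1 + s)`.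
Since `s = α / 2n + O(n⁻³)`, this gives `μ = 1 - α / n + O(n⁻²)`; in particular
`n (μ - 1) → -α`, hence `n log μ → -α` and `μ ^ (n / 2) → exp (-α / 2)`.
-/

open Filter Asymptotics Topology Real

lemma three_sub_cos_two_mul_div_one_add_cos_two_mul (x : ℝ) :
    (3 - cos (2 * x)) / (1 + cos (2 * x)) = (1 + sin x ^ 2) / (1 - sin x ^ 2) := by
  rw [cos_two_mul, sin_sq]
  ring

lemma eq_one_sub_div_one_add_of_one_add_sq_div_eq {m s : ℝ} (hm : m ∈ Set.Ioo 0 1)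
    (hs0 : 0 ≤ s) (hs1 : s < 1) (h : (1 + m ^ 2) / (2 * m) = (1 + s ^ 2) / (1 - s ^ 2)) :
    m = (1 - s) / (1 + s) := by
  obtain ⟨hm0, hm1⟩ := hm
  rw [div_eq_div_iff (by positivity) (by nlinarith)] at h
  have hfactor : ((1 + s) * m - (1 - s)) * ((1 - s) * m - (1 + s)) = 0 := by
    linear_combination h
  have hother : (1 - s) * m - (1 + s) ≠ 0 := by nlinarith
  rw [eq_div_iff (by linarith)]
  linarith [(mul_eq_zero.mp hfactor).resolve_right hother]

lemma abs_one_sub_sin_div_one_add_sin_sub_le {x : ℝ} (hx0 : 0 ≤ x) (hx1 : x ≤ 1) :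
    |(1 - sin x) / (1 + sin x) - (1 - 2 * x)| ≤ 3 * x ^ 2 := by
  have hs0 : 0 ≤ sin x := sin_nonneg_of_nonneg_of_le_pi hx0 (by linarith [pi_gt_three])
  have hsx : sin x ≤ x := sin_le hx0
  have hcube : x - x ^ 3 / 6 ≤ sin x := sin_ge_sub_cube hx0
  have hsplit : (1 - sin x) / (1 + sin x) - (1 - 2 * x) =
      2 * (x - sin x) + 2 * sin x ^ 2 / (1 + sin x) := by
    field_simp
    ring
  have hquot : 2 * sin x ^ 2 / (1 + sin x) ≤ 2 * x ^ 2 :=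
    (div_le_self (by positivity) (by linarith)).trans (by gcongr)
  rw [hsplit, abs_of_nonneg (by positivity)]
  nlinarith [pow_le_pow_of_le_one hx0 hx1 (by norm_num : 2 ≤ 3)]

lemma tendsto_natCast_mul_sub_one_of_isBigO {u : ℕ → ℝ} {t : ℝ}
    (h : (fun n : ℕ => u n - (1 - t / n)) =O[atTop] fun n : ℕ => ((n : ℝ) ^ 2)⁻¹) :
    Tendsto (fun n : ℕ => n * (u n - 1)) atTop (𝓝 (-t)) := by
  have hsmall : (fun n : ℕ => n * (u n - (1 - t / n))) =O[atTop] fun n : ℕ => (n : ℝ)⁻¹ := by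
    refine ((isBigO_refl (fun n : ℕ => (n : ℝ)) atTop).mul h).congr' .rfl ?_
    filter_upwards [eventually_ne_atTop 0] with n hn
    field_simp
  have hzero := hsmall.trans_tendsto (tendsto_inv_atTop_zero.comp tendsto_natCast_atTop_atTop)
  rw [← zero_sub]
  refine (hzero.sub_const t).congr' ?_
  filter_upwards [eventually_ne_atTop 0] with n hn
  field_simp
  ring

lemma tendsto_rpow_natCast_div_exp_of_tendsto {u : ℕ → ℝ} {t : ℝ} (c : ℝ)
    (hu : ∀ᶠ n in atTop, 0 < u n) (h : Tendsto (fun n : ℕ => n * (u n - 1)) atTop (𝓝 t)) :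
    Tendsto (fun n : ℕ => u n ^ ((n : ℝ) / c)) atTop (𝓝 (exp (t / c))) := by
  have hlog : Tendsto (fun n : ℕ => n * log (u n)) atTop (𝓝 t) := by
    simpa using tendsto_nat_mul_log_one_add_of_tendsto h
  refine ((continuous_exp.tendsto _).comp (hlog.div_const c)).congr' ?_
  filter_upwards [hu] with n hn
  rw [Function.comp_apply, rpow_def_of_pos hn]
  ring_nf

/-- If μ_{α,n} ∈ (0,1) satisfies (1+μ²)/(2μ) = (3-ρ)/(1+ρ) with ρ = cos(α/n), then
    μ_{α,n} = 1 - α/n + O(n⁻²) and μ_{α,n}^{n/2} → exp(-α/2). -/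
theorem stmt1 (α : ℝ) (hα : 0 < α) (μ : ℕ → ℝ)
    (hμ : ∀ᶠ n : ℕ in atTop, μ n ∈ Set.Ioo (0 : ℝ) 1 ∧
      (1 + (μ n) ^ 2) / (2 * μ n) =
        (3 - Real.cos (α / n)) / (1 + Real.cos (α / n))) :
    (fun n : ℕ => μ n - (1 - α / n)) =O[atTop] (fun n : ℕ => ((n : ℝ) ^ 2)⁻¹) ∧
    Tendsto (fun n : ℕ => (μ n) ^ ((n : ℝ) / 2)) atTop (nhds (Real.exp (-α / 2))) := by
  have hsmall : ∀ᶠ n : ℕ in atTop, α / (2 * n) < 1 :=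
    (tendsto_const_nhds.div_atTop (tendsto_natCast_atTop_atTop.const_mul_atTop two_pos)).eventually
      (gt_mem_nhds one_pos)
  have hclosed : ∀ᶠ n : ℕ in atTop,
      μ n = (1 - sin (α / (2 * n))) / (1 + sin (α / (2 * n))) := by
    filter_upwards [hμ, hsmall] with n ⟨hmem, heq⟩ hx1
    have hx0 : 0 ≤ α / (2 * n) := by positivity
    refine eq_one_sub_div_one_add_of_one_add_sq_div_eq hmem
      (sin_nonneg_of_nonneg_of_le_pi hx0 (by linarith [pi_gt_three]))
      ((sin_le hx0).trans_lt hx1) ?_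
    rwa [← three_sub_cos_two_mul_div_one_add_cos_two_mul, show 2 * (α / (2 * n)) = α / n by ring]
  have hO : (fun n : ℕ => μ n - (1 - α / n)) =O[atTop] fun n : ℕ => ((n : ℝ) ^ 2)⁻¹ := by
    refine IsBigO.of_bound (3 * α ^ 2 / 4) ?_
    filter_upwards [hclosed, hsmall] with n hμn hx1
    have hbound := abs_one_sub_sin_div_one_add_sin_sub_le (by positivity) hx1.le
    rw [← hμn, show 2 * (α / (2 * n)) = α / n by ring] at hbound
    rw [norm_eq_abs, norm_inv, norm_pow, RCLike.norm_natCast]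
    convert hbound using 1
    ring
  refine ⟨hO, ?_⟩
  simpa [neg_div] using
    tendsto_rpow_natCast_div_exp_of_tendsto 2 (hμ.mono fun n h => h.1.1)
      (tendsto_natCast_mul_sub_one_of_isBigO hO)
end

section
/- For r ∈ [0,1), the function f_r(t) = ((1-rt)/(1-r/t))^{-1/2} defined on the unit circle (with the principal branch, so that f_r(−1)=1) converges in measure, as r → 1⁻, to the function u_{-1/2,1}(e^{iθ}) = exp(-i(θ-π)/2) for 0 < θ < 2π. -/
/-! For θ ∈ (0, 2π) the point z = e^{iθ} differs from 1, so the base (1 - r z) / (1 - r z⁻¹)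
tends to (1 - z) / (1 - z⁻¹) = -z = e^{i(θ - π)}. Since θ - π ∈ (-π, π), this limit lies in the
slit plane, where the principal power is continuous and equals e^{-i(θ - π)/2}. Pointwise
convergence on the finite interval then gives convergence in measure. -/

open MeasureTheory Complex Filter Topology
open scoped Real

namespace MeasureTheory

theorem tendstoInMeasure_of_tendsto_ae_of_isCountablyGenerated {α ι E : Type*}
    [MeasurableSpace α] [PseudoEMetricSpace E] {μ : Measure α} [IsFiniteMeasure μ]
    {l : Filter ι} [l.IsCountablyGenerated] {f : ι → α → E} {g : α → E}
    (hf : ∀ i, AEStronglyMeasurable (f i) μ)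
    (hfg : ∀ᵐ x ∂μ, Tendsto (fun i => f i x) l (𝓝 (g x))) : TendstoInMeasure μ f l g :=
  fun ε hε => tendsto_iff_seq_tendsto.2 fun ns hns =>
    tendstoInMeasure_of_tendsto_ae (fun n => hf (ns n)) (hfg.mono fun _ hx => hx.comp hns) ε hε

end MeasureTheory

namespace Complex

lemma one_sub_div_one_sub_inv {z : ℂ} (h0 : z ≠ 0) (h1 : z ≠ 1) :
    (1 - z) / (1 - z⁻¹) = -z := by
  have : 1 - z⁻¹ ≠ 0 := sub_ne_zero.2 fun h => h1 (inv_eq_one.1 h.symm)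
  field_simp
  ring

lemma tendsto_one_sub_mul_div_one_sub_mul_inv {z : ℂ} (h0 : z ≠ 0) (h1 : z ≠ 1) :
    Tendsto (fun r : ℝ => (1 - r * z) / (1 - r * z⁻¹)) (𝓝 1) (𝓝 (-z)) := by
  have hden : 1 - z⁻¹ ≠ 0 := sub_ne_zero.2 fun h => h1 (inv_eq_one.1 h.symm)
  have hcont : ContinuousAt (fun r : ℝ => (1 - r * z) / (1 - r * z⁻¹)) 1 := by
    refine ContinuousAt.div (by fun_prop) (by fun_prop) ?_
    simpa using hden
  simpa [one_sub_div_one_sub_inv h0 h1] using hcont.tendsto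

lemma exp_cpow_of_im_mem_Ioc {w : ℂ} (hw : w.im ∈ Set.Ioc (-π) π) (s : ℂ) :
    exp w ^ s = exp (w * s) := by
  rw [cpow_def_of_ne_zero (exp_ne_zero w), log_exp hw.1 hw.2]

lemma exp_mem_slitPlane_of_im_mem_Ioo {w : ℂ} (hw : w.im ∈ Set.Ioo (-π) π) :
    exp w ∈ slitPlane := by
  rw [mem_slitPlane_iff_arg, arg_exp, toIocMod_eq_self _ |>.2 ⟨hw.1, by linarith [hw.2]⟩]
  exact ⟨hw.2.ne, exp_ne_zero w⟩

lemma neg_exp_mul_I (θ : ℝ) : -exp (θ * I) = exp ((θ - π : ℝ) * I) := by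
  rw [ofReal_sub, sub_mul, exp_sub, exp_pi_mul_I, div_neg, div_one]

lemma tendsto_cpow_one_sub_mul_exp_div {θ : ℝ} (hθ : θ ∈ Set.Ioo 0 (2 * π)) (s : ℂ) :
    Tendsto (fun r : ℝ => ((1 - r * exp (θ * I)) / (1 - r * exp (-θ * I))) ^ s) (𝓝 1)
      (𝓝 (exp ((θ - π : ℝ) * I * s))) := by
  have hθπ : (((θ - π : ℝ) : ℂ) * I).im ∈ Set.Ioo (-π) π := by
    simp only [mul_I_im, ofReal_re]
    constructor <;> linarith [hθ.1, hθ.2]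
  have hslit : -exp (θ * I) ∈ slitPlane := neg_exp_mul_I θ ▸ exp_mem_slitPlane_of_im_mem_Ioo hθπ
  have hne : exp (θ * I) ≠ 1 := fun h => by norm_num [h, mem_slitPlane_iff] at hslit
  have hbase := tendsto_one_sub_mul_div_one_sub_mul_inv (exp_ne_zero _) hne
  have hlim := (continuousAt_cpow_const (b := s) hslit).tendsto.comp hbase
  rw [neg_exp_mul_I, exp_cpow_of_im_mem_Ioc (Set.Ioo_subset_Ioc_self hθπ)] at hlim
  simpa only [neg_mul, exp_neg, Function.comp_def] using hlim

end Complex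

/-- As r → 1⁻, the function f_r(e^{iθ}) = ((1-re^{iθ})/(1-re^{-iθ}))^{-1/2}
    (principal branch) converges in measure on (0,2π) to
    u_{-1/2,1}(e^{iθ}) = exp(-i(θ-π)/2). -/
theorem stmt5 :
    TendstoInMeasure (volume.restrict (Set.Ioo (0 : ℝ) (2 * Real.pi)))
      (fun r : ℝ => fun θ : ℝ =>
        (((1 : ℂ) - r * Complex.exp (θ * Complex.I)) /
          ((1 : ℂ) - r * Complex.exp (-θ * Complex.I))) ^ (-(1 / 2) : ℂ))
      (nhdsWithin 1 (Set.Iio (1 : ℝ)))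
      (fun θ : ℝ => Complex.exp (-(Complex.I * (θ - Real.pi)) / 2)) := by
  refine tendstoInMeasure_of_tendsto_ae_of_isCountablyGenerated
    (fun r => (by fun_prop : Measurable _).aestronglyMeasurable) ?_
  filter_upwards [ae_restrict_mem measurableSet_Ioo] with θ hθ
  have hexp : exp (-(I * (θ - π)) / 2) = exp ((θ - π : ℝ) * I * (-(1 / 2))) := by
    push_cast
    ring_nf
  rw [hexp]
  exact (tendsto_cpow_one_sub_mul_exp_div hθ _).mono_left nhdsWithin_le_nhds
end

section
/- For a ∈ L¹ of the unit circle, even (a(e^{-iθ}) = a(e^{iθ})), define b ∈ L¹[-1,1] by b(cos θ) = a(e^{iθ})·sqrt((1+cos θ)/(1-cos θ)), assuming b is integrable. Then the Fourier coefficients a_k of a and the moments b_k = (1/π)∫_{-1}^1 b(x)(2x)^{k-1}dx satisfy: det(T_n(a) + H_n(a)) = det H_n[b], where T_n(a) = (a_{j-k})_{j,k=0}^{n-1} and H_n(a) = (a_{j+k+1})_{j,k=0}^{n-1}, and H_n[b] = (b_{j+k+1})_{j,k=0}^{n-1}. -/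
/-!
Let `W_j` be the monic polynomial of degree `j` with `cos (θ/2) * W_j (2 cos θ) = cos ((j + 1/2) θ)`.
Then `cos ((j - k) θ) + cos ((j + k + 1) θ) = 2 cos ((j + 1/2) θ) cos ((k + 1/2) θ)
= (1 + cos θ) W_j (2 cos θ) W_k (2 cos θ)`, so `T_n(a) + H_n(a)` is the Gram matrix `(φ (W_j W_k))`
of the functional `φ p = (1/2π) ∫ a(θ) (1 + cos θ) p(2 cos θ) dθ`. Expanding the `W_j` in powers of
`X` writes it as `L (φ (X ^ (i + l))) Lᵀ` with `L` unitriangular. Finally `φ (X ^ m) = b_{m+1}`: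
evenness folds `[0, 2π]` onto `[0, π]`, and after substituting `x = cos θ` the Jacobian `sin θ`
turns `b (cos θ)` back into `a θ (1 + cos θ)`.
-/

open MeasureTheory Matrix Polynomial Real

/-- The Chebyshev polynomials of the third kind in the variable `2x`: `V_n(x) = W_n(2x)`. -/
noncomputable def rescaledChebyshevV (R : Type*) [CommRing R] : ℕ → R[X]
  | 0 => 1
  | 1 => X - 1
  | n + 2 => X * rescaledChebyshevV R (n + 1) - rescaledChebyshevV R n

section rescaledChebyshevV

variable (R : Type*) [CommRing R]

theorem natDegree_rescaledChebyshevV_le (n : ℕ) : (rescaledChebyshevV R n).natDegree ≤ n := by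
  induction n using Nat.twoStepInduction with
  | zero => simp [rescaledChebyshevV]
  | one => simp only [rescaledChebyshevV]; compute_degree
  | more n ih₀ ih₁ =>
    simp only [rescaledChebyshevV]
    refine (natDegree_sub_le _ _).trans (max_le ?_ (by omega))
    exact natDegree_mul_le.trans (by linarith [natDegree_X_le (R := R)])

theorem coeff_rescaledChebyshevV_self (n : ℕ) : (rescaledChebyshevV R n).coeff n = 1 := by
  induction n using Nat.twoStepInduction with
  | zero => simp [rescaledChebyshevV]
  | one => simp [rescaledChebyshevV, coeff_one]
  | more n ih₀ ih₁ =>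
    have h : (rescaledChebyshevV R n).coeff (n + 2) = 0 :=
      coeff_eq_zero_of_natDegree_lt ((natDegree_rescaledChebyshevV_le R n).trans_lt (by omega))
    simp [rescaledChebyshevV, coeff_X_mul, ih₁, h]

end rescaledChebyshevV

theorem cos_half_mul_eval_rescaledChebyshevV (n : ℕ) (θ : ℝ) :
    cos (θ / 2) * (rescaledChebyshevV ℝ n).eval (2 * cos θ) = cos ((n + 1 / 2) * θ) := by
  have shift : ∀ x, cos (x + θ) = 2 * cos θ * cos x - cos (x - θ) := fun x => by
    rw [cos_add, cos_sub]; ring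
  induction n using Nat.twoStepInduction with
  | zero => simp [rescaledChebyshevV]; ring_nf
  | one =>
    simp only [rescaledChebyshevV, eval_sub, eval_X, eval_one]
    rw [show ((1 : ℕ) + 1 / 2 : ℝ) * θ = θ / 2 + θ by push_cast; ring, shift,
      show θ / 2 - θ = -(θ / 2) by ring, cos_neg]
    ring
  | more n ih₀ ih₁ =>
    simp only [rescaledChebyshevV, eval_sub, eval_mul, eval_X]
    rw [show ((n + 2 : ℕ) + 1 / 2 : ℝ) * θ = ((n + 1 : ℕ) + 1 / 2) * θ + θ by push_cast; ring,
      shift, show ((n + 1 : ℕ) + 1 / 2 : ℝ) * θ - θ = (n + 1 / 2) * θ by push_cast; ring,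
      ← ih₀, ← ih₁]
    ring

theorem cos_sub_mul_add_cos_add_succ_mul (j k : ℕ) (θ : ℝ) :
    cos (((j : ℝ) - (k : ℝ)) * θ) + cos (((j + k + 1 : ℕ) : ℝ) * θ) =
      (1 + cos θ) * ((rescaledChebyshevV ℝ j).eval (2 * cos θ) *
        (rescaledChebyshevV ℝ k).eval (2 * cos θ)) := by
  have one_add_cos : 1 + cos θ = 2 * cos (θ / 2) ^ 2 := by
    rw [cos_sq, show 2 * (θ / 2) = θ by ring]; ring
  rw [cos_add_cos, one_add_cos, show ((j - k) * θ + ((j + k + 1 : ℕ) : ℝ) * θ) / 2 = (j + 1 / 2) * θ by push_cast; ring,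
    show ((j - k) * θ - ((j + k + 1 : ℕ) : ℝ) * θ) / 2 = -((k + 1 / 2) * θ) by push_cast; ring,
    cos_neg, ← cos_half_mul_eval_rescaledChebyshevV, ← cos_half_mul_eval_rescaledChebyshevV]
  ring

theorem det_map_mul_eq_det_map_X_pow_add {R : Type*} [CommRing R] (φ : R[X] →ₗ[R] R)
    (P : ℕ → R[X]) (hdeg : ∀ j, (P j).natDegree ≤ j) (hcoeff : ∀ j, (P j).coeff j = 1) (n : ℕ) :
    det (of fun j k : Fin n => φ (P j * P k)) = det (of fun j k : Fin n => φ (X ^ (j + k : ℕ))) := by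
  set C : Matrix (Fin n) (Fin n) R := of fun j i => (P j).coeff i
  have expand (j : Fin n) : P j = ∑ i : Fin n, C j i • X ^ (i : ℕ) := by
    rw [as_sum_range_C_mul_X_pow' (P j) ((hdeg j).trans_lt j.2), ← Fin.sum_univ_eq_sum_range]
    simp [C, smul_eq_C_mul]
  have gram : of (fun j k : Fin n => φ (P j * P k)) =
      C * of (fun i l : Fin n => φ (X ^ (i + l : ℕ))) * Cᵀ := by
    ext j k
    rw [of_apply, expand j, expand k, Finset.sum_mul_sum, Finset.sum_comm]
    simp only [mul_apply, of_apply, transpose_apply, Finset.sum_mul, map_sum, smul_mul_smul_comm,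
      ← pow_add, map_smul, smul_eq_mul]
    exact Finset.sum_congr rfl fun l _ => Finset.sum_congr rfl fun i _ => by ring
  have unitriangular : C.det = 1 := by
    rw [det_of_isLowerTriangular C fun i j (hij : (i : ℕ) < j) =>
      coeff_eq_zero_of_natDegree_lt ((hdeg i).trans_lt hij)]
    exact Finset.prod_eq_one fun i _ => hcoeff i
  rw [gram, det_mul, det_mul, det_transpose, unitriangular, one_mul, mul_one]

noncomputable def weightedEvalIntegral (w f : ℝ → ℝ) (α β : ℝ)
    (hw : IntervalIntegrable w volume α β) (hf : Continuous f) : ℝ[X] →ₗ[ℝ] ℝ where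
  toFun p := ∫ x in α..β, w x * p.eval (f x)
  map_add' p q := by
    simp only [eval_add, mul_add]
    exact intervalIntegral.integral_add (hw.mul_continuousOn (by fun_prop))
      (hw.mul_continuousOn (by fun_prop))
  map_smul' c p := by
    simp only [eval_smul, smul_eq_mul, RingHom.id_apply, ← intervalIntegral.integral_const_mul]
    congr 1 with x
    ring

theorem integral_zero_two_mul_eq_two_mul_integral_of_symm {F : ℝ → ℝ} {c : ℝ}
    (hF : IntervalIntegrable F volume 0 (2 * c)) (hsymm : ∀ x, F (2 * c - x) = F x) :
    ∫ x in (0 : ℝ)..2 * c, F x = 2 * ∫ x in (0 : ℝ)..c, F x := by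
  have hc : c ∈ Set.uIcc 0 (2 * c) := by
    rcases le_total 0 c with h | h
    · exact Set.mem_uIcc.2 (Or.inl ⟨h, by linarith⟩)
    · exact Set.mem_uIcc.2 (Or.inr ⟨by linarith, h⟩)
  have reflect : ∫ x in c..2 * c, F x = ∫ x in (0 : ℝ)..c, F x := by
    have h := intervalIntegral.integral_comp_sub_left F (2 * c) (a := 0) (b := c)
    simp only [hsymm, sub_zero, show 2 * c - c = c by ring] at h
    exact h.symm
  rw [← intervalIntegral.integral_add_adjacent_intervals (hF.mono_set (Set.uIcc_subset_uIcc_left hc))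
    (hF.mono_set (Set.uIcc_subset_uIcc_right hc)), reflect, two_mul]

theorem integral_sin_mul_comp_cos (g : ℝ → ℝ) :
    ∫ θ in (0 : ℝ)..π, sin θ * g (cos θ) = ∫ x in (-1 : ℝ)..1, g x := by
  have image : cos '' Set.Icc 0 π = Set.Icc (-1) 1 :=
    Set.Subset.antisymm (Set.image_subset_iff.2 fun x _ => ⟨neg_one_le_cos x, cos_le_one x⟩)
      surjOn_cos
  have subst := integral_image_eq_integral_abs_deriv_smul measurableSet_Icc
    (fun x _ => (hasDerivAt_cos x).hasDerivWithinAt) injOn_cos g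
  rw [image] at subst
  rw [intervalIntegral.integral_of_le pi_pos.le, intervalIntegral.integral_of_le (by norm_num),
    ← integral_Icc_eq_integral_Ioc, ← integral_Icc_eq_integral_Ioc, subst]
  refine setIntegral_congr_fun measurableSet_Icc fun θ hθ => ?_
  rw [abs_neg, abs_of_nonneg (sin_nonneg_of_nonneg_of_le_pi hθ.1 hθ.2), smul_eq_mul]

theorem sin_mul_sqrt_one_add_cos_div_one_sub_cos {θ : ℝ} (hθ : θ ∈ Set.Ioo 0 π) :
    sin θ * √((1 + cos θ) / (1 - cos θ)) = 1 + cos θ := by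
  have hsin : 0 < sin θ := sin_pos_of_pos_of_lt_pi hθ.1 hθ.2
  have sin_sq_eq : sin θ ^ 2 = (1 - cos θ) * (1 + cos θ) := by rw [sin_sq]; ring
  have hcos : 0 < 1 + cos θ := by nlinarith [cos_le_one θ]
  have hratio : (1 + cos θ) / (1 - cos θ) = ((1 + cos θ) / sin θ) ^ 2 := by
    rw [div_pow, sin_sq_eq]
    field_simp
  rw [hratio, sqrt_sq (div_nonneg hcos.le hsin.le)]
  field_simp

theorem integral_mul_one_add_cos_comp_cos_eq {a b g : ℝ → ℝ}
    (ha_per : ∀ θ : ℝ, a (θ + 2 * π) = a θ) (ha_even : ∀ θ : ℝ, a (-θ) = a θ)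
    (ha_int : IntervalIntegrable a volume 0 (2 * π))
    (hab : ∀ θ ∈ Set.Ioo (0 : ℝ) π, b (cos θ) = a θ * √((1 + cos θ) / (1 - cos θ)))
    (hg : Continuous g) :
    ∫ θ in (0 : ℝ)..2 * π, a θ * (1 + cos θ) * g (cos θ) = 2 * ∫ x in (-1 : ℝ)..1, b x * g x := by
  have reflect (θ : ℝ) : a (2 * π - θ) = a θ ∧ cos (2 * π - θ) = cos θ := by
    rw [sub_eq_neg_add, ha_per, ha_even, cos_add_two_pi, cos_neg]
    exact ⟨rfl, rfl⟩
  simp_rw [mul_assoc]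
  rw [integral_zero_two_mul_eq_two_mul_integral_of_symm
      (ha_int.mul_continuousOn (by fun_prop)) fun θ => by rw [(reflect θ).1, (reflect θ).2],
    ← integral_sin_mul_comp_cos]
  congr 1
  refine intervalIntegral.integral_congr_Ioo_of_le pi_pos.le fun θ hθ => ?_
  rw [hab θ hθ]
  linear_combination -(a θ * g (cos θ)) * sin_mul_sqrt_one_add_cos_div_one_sub_cos hθ

theorem stmt9_general (n : ℕ) (a b : ℝ → ℝ)
    (ha_per : ∀ θ : ℝ, a (θ + 2 * Real.pi) = a θ)
    (ha_even : ∀ θ : ℝ, a (-θ) = a θ)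
    (ha_int : IntervalIntegrable a volume 0 (2 * Real.pi))
    (hab : ∀ θ ∈ Set.Ioo (0 : ℝ) Real.pi,
      b (Real.cos θ) = a θ * Real.sqrt ((1 + Real.cos θ) / (1 - Real.cos θ))) :
    Matrix.det (Matrix.of fun j k : Fin n =>
        ((1 / (2 * Real.pi)) *
            ∫ θ in (0 : ℝ)..(2 * Real.pi), a θ * Real.cos ((((j : ℕ) : ℝ) - ((k : ℕ) : ℝ)) * θ)) +
        ((1 / (2 * Real.pi)) *
            ∫ θ in (0 : ℝ)..(2 * Real.pi), a θ * Real.cos ((((j : ℕ) + (k : ℕ) + 1 : ℕ) : ℝ) * θ))) =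
    Matrix.det (Matrix.of fun j k : Fin n =>
        (1 / Real.pi) * ∫ x in (-1 : ℝ)..1, b x * (2 * x) ^ ((j : ℕ) + (k : ℕ))) := by
  set φ := (2 * π)⁻¹ • weightedEvalIntegral (fun θ => a θ * (1 + cos θ)) (fun θ => 2 * cos θ)
    0 (2 * π) (ha_int.mul_continuousOn (by fun_prop)) (by fun_prop)
  convert det_map_mul_eq_det_map_X_pow_add φ (rescaledChebyshevV ℝ)
    (natDegree_rescaledChebyshevV_le ℝ) (coeff_rescaledChebyshevV_self ℝ) n using 2
  · ext j k
    simp only [of_apply, φ, LinearMap.smul_apply, weightedEvalIntegral, LinearMap.coe_mk,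
      AddHom.coe_mk, eval_mul, smul_eq_mul, one_div]
    rw [← mul_add, ← intervalIntegral.integral_add (ha_int.mul_continuousOn (by fun_prop))
      (ha_int.mul_continuousOn (by fun_prop))]
    congr 1
    refine intervalIntegral.integral_congr fun θ _ => ?_
    rw [← mul_add, cos_sub_mul_add_cos_add_succ_mul, mul_assoc]
  · ext j k
    simp only [of_apply, φ, LinearMap.smul_apply, weightedEvalIntegral, LinearMap.coe_mk,
      AddHom.coe_mk, eval_pow, eval_X, smul_eq_mul]
    rw [integral_mul_one_add_cos_comp_cos_eq (g := fun x => (2 * x) ^ ((j : ℕ) + (k : ℕ)))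
      ha_per ha_even ha_int hab (by fun_prop)]
    field_simp

/-- Toeplitz+Hankel to Hankel determinant identity: for an even integrable function a
    on the unit circle and b(cos θ) = a(e^{iθ})√((1+cos θ)/(1-cos θ)) integrable on
    [-1,1], one has det(T_n(a)+H_n(a)) = det H_n[b]. -/
theorem stmt9 (n : ℕ) (a b : ℝ → ℝ)
    (ha_per : ∀ θ : ℝ, a (θ + 2 * Real.pi) = a θ)
    (ha_even : ∀ θ : ℝ, a (-θ) = a θ)
    (ha_int : IntervalIntegrable a volume 0 (2 * Real.pi))
    (hb_int : IntegrableOn b (Set.Icc (-1 : ℝ) 1))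
    (hab : ∀ θ ∈ Set.Ioo (0 : ℝ) Real.pi,
      b (Real.cos θ) = a θ * Real.sqrt ((1 + Real.cos θ) / (1 - Real.cos θ))) :
    Matrix.det (Matrix.of fun j k : Fin n =>
        ((1 / (2 * Real.pi)) *
            ∫ θ in (0 : ℝ)..(2 * Real.pi), a θ * Real.cos ((((j : ℕ) : ℝ) - ((k : ℕ) : ℝ)) * θ)) +
        ((1 / (2 * Real.pi)) *
            ∫ θ in (0 : ℝ)..(2 * Real.pi), a θ * Real.cos ((((j : ℕ) + (k : ℕ) + 1 : ℕ) : ℝ) * θ))) =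
    Matrix.det (Matrix.of fun j k : Fin n =>
        (1 / Real.pi) * ∫ x in (-1 : ℝ)..1, b x * (2 * x) ^ ((j : ℕ) + (k : ℕ))) :=
  stmt9_general n a b ha_per ha_even ha_int hab
end

section
/- Let K: ℝ → ℝ be continuously differentiable with bounded derivative on compact sets, and fix α > 0. Define A_n = ((α/n)K(α(j-k)/n) + (α/n)K(α(j+k+1)/n))_{j,k=0}^{n-1} and B_n = ((α/n)∫₀¹∫₀¹ [K(α(j-k+ξ-η)/n) + K(α(j+k+ξ+η)/n)] dξ dη)_{j,k=0}^{n-1}. Then each entry of A_n - B_n is O(n⁻²) uniformly in j,k, and hence the Hilbert-Schmidt (Frobenius) norm of A_n - B_n is O(n⁻¹). -/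
/-!
Replacing the point values of `K` by its averages over cells of size `α / n` moves each
argument by at most `|α| / n`. All arguments stay in the compact interval `[-2|α|, 2|α|]`,
on which the `C¹` function `K` is Lipschitz, so each bracket changes by `O(1/n)`; together with
the prefactor `α / n` every entry of `A_n - B_n` is `O(n⁻²)`. Summing `n²` squares of such
entries gives a Frobenius norm of order `n · n⁻² = n⁻¹`.
-/

open Set Metric MeasureTheory intervalIntegral
open scoped NNReal

noncomputable section

lemma abs_intervalIntegral_unit_sub_le {g : ℝ → ℝ} (hg : IntervalIntegrable g volume 0 1)
    {c M : ℝ} (h : ∀ x ∈ Icc (0 : ℝ) 1, |g x - c| ≤ M) :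
    |(∫ x in (0 : ℝ)..1, g x) - c| ≤ M := by
  calc |(∫ x in (0 : ℝ)..1, g x) - c| = |∫ x in (0 : ℝ)..1, (g x - c)| := by
        rw [integral_sub hg intervalIntegrable_const]; simp
    _ ≤ M * |1 - 0| := norm_integral_le_of_norm_le_const (f := fun x => g x - c) fun x hx =>
        h x (Ioc_subset_Icc_self (by rwa [uIoc_of_le zero_le_one] at hx))
    _ = M := by simp

lemma abs_integral_integral_unit_sub_le {f : ℝ → ℝ → ℝ} (hf : Continuous (Function.uncurry f))
    {c M : ℝ} (h : ∀ x ∈ Icc (0 : ℝ) 1, ∀ y ∈ Icc (0 : ℝ) 1, |f x y - c| ≤ M) :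
    |(∫ x in (0 : ℝ)..1, ∫ y in (0 : ℝ)..1, f x y) - c| ≤ M :=
  abs_intervalIntegral_unit_sub_le
    ((continuous_parametric_intervalIntegral_of_continuous' hf 0 1).intervalIntegrable 0 1)
    fun x hx => abs_intervalIntegral_unit_sub_le
      ((hf.comp (Continuous.prodMk_right x)).intervalIntegrable 0 1) (h x hx)

lemma Real.sqrt_sum_sum_sq_le_of_abs_le {ι : Type*} [Fintype ι] (f : ι → ι → ℝ) {ε : ℝ}
    (hε : 0 ≤ ε) (h : ∀ i j, |f i j| ≤ ε) :
    √(∑ i, ∑ j, f i j ^ 2) ≤ Fintype.card ι * ε := by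
  refine Real.sqrt_le_iff.mpr ⟨by positivity, ?_⟩
  calc ∑ i, ∑ j, f i j ^ 2 ≤ ∑ _i : ι, ∑ _j : ι, ε ^ 2 := by
        refine Finset.sum_le_sum fun i _ => Finset.sum_le_sum fun j _ => ?_
        exact sq_le_sq' (abs_le.mp (h i j)).1 (abs_le.mp (h i j)).2
    _ = (Fintype.card ι * ε) ^ 2 := by simp [Finset.sum_const]; ring

lemma LipschitzOnWith.abs_sub_le_of_scaled {K : ℝ → ℝ} {L : ℝ≥0} {α R : ℝ}
    (hK : LipschitzOnWith L K (closedBall 0 (R * |α|))) {n : ℝ} (hn : 0 < n) {t t' : ℝ}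
    (ht : |t| ≤ R * n) (ht' : |t'| ≤ R * n) (htt' : |t - t'| ≤ 1) :
    |K (α * t / n) - K (α * t' / n)| ≤ L * |α| / n := by
  have mem : ∀ u : ℝ, |u| ≤ R * n → α * u / n ∈ closedBall (0 : ℝ) (R * |α|) := by
    intro u hu
    rw [mem_closedBall_zero_iff, Real.norm_eq_abs, abs_div, abs_mul, abs_of_pos hn,
      div_le_iff₀ hn]
    nlinarith [abs_nonneg α]
  calc |K (α * t / n) - K (α * t' / n)| ≤ L * |α * t / n - α * t' / n| := by
        simpa only [Real.dist_eq] using hK.dist_le_mul _ (mem t ht) _ (mem t' ht')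
    _ = L * |α| / n * |t - t'| := by
        rw [← sub_div, ← mul_sub, abs_div, abs_mul, abs_of_pos hn]; ring
    _ ≤ L * |α| / n := mul_le_of_le_one_right (by positivity) htt'

/-- The matrix `A_n` of point values of the kernel `K(x - y) + K(x + y)`. -/
def pointMatrix (K : ℝ → ℝ) (α : ℝ) (n : ℕ) : Matrix (Fin n) (Fin n) ℝ :=
  Matrix.of fun j k =>
    (α / n) * (K (α * (((j : ℕ) : ℝ) - ((k : ℕ) : ℝ)) / n) +
      K (α * (((j : ℕ) : ℝ) + ((k : ℕ) : ℝ) + 1) / n))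

/-- The matrix `B_n` of cell averages of the kernel `K(x - y) + K(x + y)`. -/
def cellMatrix (K : ℝ → ℝ) (α : ℝ) (n : ℕ) : Matrix (Fin n) (Fin n) ℝ :=
  Matrix.of fun j k =>
    (α / n) * ∫ ξ in (0 : ℝ)..1, ∫ η in (0 : ℝ)..1,
      (K (α * (((j : ℕ) : ℝ) - ((k : ℕ) : ℝ) + ξ - η) / n) +
        K (α * (((j : ℕ) : ℝ) + ((k : ℕ) : ℝ) + ξ + η) / n))

lemma abs_pointMatrix_sub_cellMatrix_le {K : ℝ → ℝ} (hKc : Continuous K) {L : ℝ≥0} {α : ℝ}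
    (hK : LipschitzOnWith L K (closedBall 0 (2 * |α|))) {n : ℕ} (hn : 0 < n) (j k : Fin n) :
    |(pointMatrix K α n - cellMatrix K α n) j k| ≤ 2 * L * α ^ 2 / (n : ℝ) ^ 2 := by
  have hn' : (0 : ℝ) < n := Nat.cast_pos.mpr hn
  have hj : ((j : ℕ) : ℝ) + 1 ≤ n := by exact_mod_cast j.isLt
  have hk : ((k : ℕ) : ℝ) + 1 ≤ n := by exact_mod_cast k.isLt
  have hj0 : (0 : ℝ) ≤ (j : ℕ) := Nat.cast_nonneg _
  have hk0 : (0 : ℝ) ≤ (k : ℕ) := Nat.cast_nonneg _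
  set d : ℝ := ((j : ℕ) : ℝ) - ((k : ℕ) : ℝ)
  set s : ℝ := ((j : ℕ) : ℝ) + ((k : ℕ) : ℝ)
  have averaged : |(∫ ξ in (0 : ℝ)..1, ∫ η in (0 : ℝ)..1,
      (K (α * (d + ξ - η) / n) + K (α * (s + ξ + η) / n))) -
        (K (α * d / n) + K (α * (s + 1) / n))| ≤ 2 * (L * |α| / n) := by
    refine abs_integral_integral_unit_sub_le (by fun_prop) fun ξ ⟨hξ0, hξ1⟩ η ⟨hη0, hη1⟩ => ?_
    have diff := hK.abs_sub_le_of_scaled hn' (t := d + ξ - η) (t' := d)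
      (abs_le.mpr ⟨by linarith, by linarith⟩) (abs_le.mpr ⟨by linarith, by linarith⟩)
      (abs_le.mpr ⟨by linarith, by linarith⟩)
    have sum := hK.abs_sub_le_of_scaled hn' (t := s + ξ + η) (t' := s + 1)
      (abs_le.mpr ⟨by linarith, by linarith⟩) (abs_le.mpr ⟨by linarith, by linarith⟩)
      (abs_le.mpr ⟨by linarith, by linarith⟩)
    calc _ = |(K (α * (d + ξ - η) / n) - K (α * d / n)) +
          (K (α * (s + ξ + η) / n) - K (α * (s + 1) / n))| := by ring_nf
      _ ≤ _ := (abs_add_le _ _).trans (by linarith)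
  calc |(pointMatrix K α n - cellMatrix K α n) j k|
      = |α| / n * |(∫ ξ in (0 : ℝ)..1, ∫ η in (0 : ℝ)..1,
          (K (α * (d + ξ - η) / n) + K (α * (s + ξ + η) / n))) -
            (K (α * d / n) + K (α * (s + 1) / n))| := by
        rw [Matrix.sub_apply, pointMatrix, cellMatrix, Matrix.of_apply, Matrix.of_apply,
          ← mul_sub, abs_mul, abs_sub_comm, abs_div, abs_of_pos hn']
    _ ≤ |α| / n * (2 * (L * |α| / n)) := by gcongr
    _ = 2 * L * α ^ 2 / (n : ℝ) ^ 2 := by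
        rw [← sq_abs α]; field_simp

end

theorem stmt13_general (K : ℝ → ℝ) (hK : ContDiff ℝ 1 K) (α : ℝ) :
    ∃ C : ℝ, ∀ n : ℕ, 0 < n →
      (∀ j k : Fin n,
        |(α / n) * (K (α * (((j : ℕ) : ℝ) - ((k : ℕ) : ℝ)) / n) +
              K (α * (((j : ℕ) : ℝ) + ((k : ℕ) : ℝ) + 1) / n)) -
          (α / n) * ∫ ξ in (0 : ℝ)..1, ∫ η in (0 : ℝ)..1,
              (K (α * (((j : ℕ) : ℝ) - ((k : ℕ) : ℝ) + ξ - η) / n) +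
                K (α * (((j : ℕ) : ℝ) + ((k : ℕ) : ℝ) + ξ + η) / n))|
          ≤ C / (n : ℝ) ^ 2) ∧
      Real.sqrt (∑ j : Fin n, ∑ k : Fin n,
        ((α / n) * (K (α * (((j : ℕ) : ℝ) - ((k : ℕ) : ℝ)) / n) +
              K (α * (((j : ℕ) : ℝ) + ((k : ℕ) : ℝ) + 1) / n)) -
          (α / n) * ∫ ξ in (0 : ℝ)..1, ∫ η in (0 : ℝ)..1,
              (K (α * (((j : ℕ) : ℝ) - ((k : ℕ) : ℝ) + ξ - η) / n) +
                K (α * (((j : ℕ) : ℝ) + ((k : ℕ) : ℝ) + ξ + η) / n))) ^ 2)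
        ≤ C / n := by
  obtain ⟨L, hL⟩ := hK.locallyLipschitz.locallyLipschitzOn.exists_lipschitzOnWith_of_compact
    (isCompact_closedBall (0 : ℝ) (2 * |α|))
  refine ⟨2 * L * α ^ 2, fun n hn => ?_⟩
  have entry := abs_pointMatrix_sub_cellMatrix_le hK.continuous hL hn
  refine ⟨entry, ?_⟩
  calc _ ≤ Fintype.card (Fin n) * (2 * L * α ^ 2 / (n : ℝ) ^ 2) :=
        Real.sqrt_sum_sum_sq_le_of_abs_le (pointMatrix K α n - cellMatrix K α n)
          (by positivity) entry
    _ = 2 * L * α ^ 2 / n := by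
        rw [Fintype.card_fin]; field_simp

/-- For K continuously differentiable and α > 0, the entries of A_n - B_n (point-value
    vs. cell-averaged discretization of the kernel K(x-y)+K(x+y)) are O(n⁻²) uniformly,
    and hence the Hilbert-Schmidt (Frobenius) norm of A_n - B_n is O(n⁻¹). -/
theorem stmt13 (K : ℝ → ℝ) (hK : ContDiff ℝ 1 K) (α : ℝ) (hα : 0 < α) :
    ∃ C : ℝ, ∀ n : ℕ, 0 < n →
      (∀ j k : Fin n,
        |(α / n) * (K (α * (((j : ℕ) : ℝ) - ((k : ℕ) : ℝ)) / n) +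
              K (α * (((j : ℕ) : ℝ) + ((k : ℕ) : ℝ) + 1) / n)) -
          (α / n) * ∫ ξ in (0 : ℝ)..1, ∫ η in (0 : ℝ)..1,
              (K (α * (((j : ℕ) : ℝ) - ((k : ℕ) : ℝ) + ξ - η) / n) +
                K (α * (((j : ℕ) : ℝ) + ((k : ℕ) : ℝ) + ξ + η) / n))|
          ≤ C / (n : ℝ) ^ 2) ∧
      Real.sqrt (∑ j : Fin n, ∑ k : Fin n,
        ((α / n) * (K (α * (((j : ℕ) : ℝ) - ((k : ℕ) : ℝ)) / n) +
              K (α * (((j : ℕ) : ℝ) + ((k : ℕ) : ℝ) + 1) / n)) -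
          (α / n) * ∫ ξ in (0 : ℝ)..1, ∫ η in (0 : ℝ)..1,
              (K (α * (((j : ℕ) : ℝ) - ((k : ℕ) : ℝ) + ξ - η) / n) +
                K (α * (((j : ℕ) : ℝ) + ((k : ℕ) : ℝ) + ξ + η) / n))) ^ 2)
        ≤ C / n :=
  stmt13_general K hK α
end

section
/- The Riemann sum discretization of the sine-kernel operator converges: for fixed α > 0 and K(x) = sin(x)/(πx), the determinants of the n×n matrices I_n - A_n^±, where A_n^± = ((α/n)[K(α(j-k)/n) ± K(α(j+k+1)/n)])_{j,k=0}^{n-1}, converge as n → ∞ to the Fredholm determinant det(I - K_α^±) of the integral operator on L²[0,α] with kernel K(x-y) ± K(x+y). -/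
/-!
Write `x_j = α (j + 1/2) / n` for the midpoint nodes. The matrix entries are
`(α/n) k(x_j, x_l)` with `k(x, y) = K(x - y) ± K(x + y)`, and expanding `det (1 - A)` in principal
minors, regrouped by ordered tuples of indices, gives
`det (1 - A) = ∑ₘ (-1)ᵐ/m! · (α/n)ᵐ ∑_{p : Fin m → Fin n} det [k(x_{pᵢ}, x_{pⱼ})]`,
whose `m`-th inner term is a midpoint Riemann sum of `x ↦ det [k(xᵢ, xⱼ)]` over `[0, α]ᵐ`. Each
Riemann sum converges to the `m`-th integral of the Fredholm series, and the series may be passed to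
the limit termwise by dominated convergence once `|det [k(xᵢ, xⱼ)]| ≤ (2/π)ᵐ`. That bound holds
because `K(a - b) ± K(a + b) = (2/π) ∫₀¹ φ(ta) φ(tb) dt` with `φ = cos` or `φ = sin`: the matrix
is a positive semidefinite Gram matrix with diagonal at most `2/π`, and AM-GM on its eigenvalues
bounds the determinant.
-/

open Filter MeasureTheory

/-- The Fredholm determinant det(I - T) of the integral operator on L²[0,α] with
    kernel `kern`, defined via the Fredholm series. -/
noncomputable def fredholmDet (α : ℝ) (kern : ℝ → ℝ → ℝ) : ℝ :=
  ∑' m : ℕ, ((-1 : ℝ) ^ m / (m.factorial : ℝ)) *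
    ∫ x : Fin m → ℝ in Set.univ.pi (fun _ => Set.Icc (0 : ℝ) α),
      Matrix.det (Matrix.of fun i j : Fin m => kern (x i) (x j))

/-- The sine kernel sin(x)/(πx), extended by 1/π at 0. -/
noncomputable def sineK (x : ℝ) : ℝ :=
  if x = 0 then 1 / Real.pi else Real.sin x / (Real.pi * x)

theorem Real.prod_le_sum_div_card_pow {ι : Type*} {s : Finset ι} {z : ι → ℝ}
    (hz : ∀ i ∈ s, 0 ≤ z i) : ∏ i ∈ s, z i ≤ ((∑ i ∈ s, z i) / s.card) ^ s.card := by
  rcases s.eq_empty_or_nonempty with rfl | hs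
  · simp
  have hk : (s.card : ℝ) ≠ 0 := by exact_mod_cast hs.card_pos.ne'
  have hamgm := Real.geom_mean_le_arith_mean_weighted s (fun _ => (s.card : ℝ)⁻¹) z
    (fun _ _ => by positivity) (by simp [hk]) hz
  rw [Real.finsetProd_rpow s z hz, ← Finset.mul_sum, inv_mul_eq_div] at hamgm
  calc ∏ i ∈ s, z i = ((∏ i ∈ s, z i) ^ (s.card : ℝ)⁻¹) ^ s.card :=
        (Real.rpow_inv_natCast_pow (Finset.prod_nonneg hz) hs.card_pos.ne').symm
    _ ≤ _ := pow_le_pow_left₀ (Real.rpow_nonneg (Finset.prod_nonneg hz) _) hamgm _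

namespace Matrix

open Finset

section PrincipalMinors

open Polynomial
open scoped Nat

variable {ι R : Type*} [DecidableEq ι] [CommRing R]

theorem exists_equiv_comp_eq_of_image_eq {m : ℕ} {p : Fin m → ι} {s : Finset ι} (hs : #s = m)
    (hp : univ.image p = s) : ∃ e : Fin m ≃ s, Subtype.val ∘ e = p := by
  let q : Fin m → s := fun a => ⟨p a, hp ▸ mem_image_of_mem p (mem_univ a)⟩
  have hq : Function.Surjective q := fun y => by
    obtain ⟨a, -, ha⟩ := mem_image.1 (hp ▸ y.2 : (y : ι) ∈ univ.image p)
    exact ⟨a, Subtype.ext ha⟩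
  exact ⟨.ofBijective q ((Fintype.bijective_iff_surjective_and_card q).2 ⟨hq, by simp [hs]⟩), rfl⟩

theorem det_submatrix_eq_of_image_eq (A : Matrix ι ι R) {m : ℕ} {p : Fin m → ι} {s : Finset ι}
    (hs : #s = m) (hp : univ.image p = s) :
    (A.submatrix p p).det = (A.submatrix (Subtype.val : s → ι) Subtype.val).det := by
  obtain ⟨e, rfl⟩ := exists_equiv_comp_eq_of_image_eq hs hp
  exact det_submatrix_equiv_self e (A.submatrix Subtype.val Subtype.val)

variable [Fintype ι]

theorem card_filter_image_eq_factorial {m : ℕ} {s : Finset ι} (hs : #s = m) :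
    #{p : Fin m → ι | univ.image p = s} = m ! := by
  have e₀ : Fin m ≃ s := (Fintype.equivFinOfCardEq (by simp [hs])).symm
  calc #{p : Fin m → ι | univ.image p = s} = #(univ : Finset (Fin m ≃ s)) := by
        symm
        refine card_bij (fun e _ => Subtype.val ∘ e) (fun e _ => ?_) (fun e₁ _ e₂ _ h => ?_)
          (fun p hp => ?_)
        · refine mem_filter.2 ⟨mem_univ _, ?_⟩
          ext x
          simp only [mem_univ, true_and, mem_image, Function.comp_apply]
          exact ⟨fun ⟨a, ha⟩ => ha ▸ (e a).2, fun hx => ⟨e.symm ⟨x, hx⟩, by simp⟩⟩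
        · exact Equiv.ext fun a => Subtype.ext (congrFun h a)
        · obtain ⟨e, he⟩ := exists_equiv_comp_eq_of_image_eq hs (mem_filter.1 hp).2
          exact ⟨e, mem_univ e, he⟩
    _ = m ! := by rw [card_univ, Fintype.card_equiv e₀, Fintype.card_fin]

theorem sum_det_submatrix_eq_factorial_mul (A : Matrix ι ι R) (m : ℕ) :
    ∑ p : Fin m → ι, (A.submatrix p p).det =
      m ! * ∑ s ∈ univ.powersetCard m, (A.submatrix (Subtype.val : s → ι) Subtype.val).det := by
  have hsplit (p : Fin m → ι) : (A.submatrix p p).det = ∑ s ∈ univ.powersetCard m,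
      if univ.image p = s then (A.submatrix (Subtype.val : s → ι) Subtype.val).det else 0 := by
    rw [sum_ite_eq]
    split_ifs with hp
    · exact det_submatrix_eq_of_image_eq A (mem_powersetCard.1 hp).2 rfl
    · have hninj : ¬ Function.Injective p := fun hinj =>
        hp (mem_powersetCard.2 ⟨subset_univ _, by simp [card_image_of_injective _ hinj]⟩)
      obtain ⟨a, b, hab, hne⟩ := Function.not_injective_iff.1 hninj
      exact det_zero_of_row_eq hne (by ext; simp [hab])
  simp_rw [hsplit, sum_comm (s := univ), ← sum_filter, sum_const, mul_sum]
  refine sum_congr rfl fun s hs => ?_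
  rw [card_filter_image_eq_factorial (mem_powersetCard.1 hs).2, nsmul_eq_mul]

theorem det_one_sub_eq_sum_range_minors (A : Matrix ι ι R) :
    (1 - A).det = ∑ k ∈ range (Fintype.card ι + 1), (-1) ^ k *
      ∑ s ∈ univ.powersetCard k, (A.submatrix (Subtype.val : s → ι) Subtype.val).det := by
  have hdeg := natDegree_det_X_add_C_le (-A) 1
  rw [Matrix.map_one _ (map_zero C) (map_one C), ← Nat.lt_succ_iff, add_comm] at hdeg
  have heval : ((1 + (X : R[X]) • (-A).map C).det).eval 1 = (1 - A).det := by
    rw [← coe_evalRingHom, RingHom.map_det]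
    congr 1
    ext i j
    by_cases h : i = j <;> simp [sub_eq_add_neg, h]
  rw [← heval, eval_eq_sum_range' hdeg]
  refine sum_congr rfl fun k _ => ?_
  rw [coeff_det_one_add_X_smul_eq_sum_minors, one_pow, mul_one, mul_sum]
  refine sum_congr rfl fun s hs => ?_
  rw [show (-A).submatrix (Subtype.val : s → ι) Subtype.val = -A.submatrix _ _ from rfl, det_neg,
    Fintype.card_coe, (mem_powersetCard.1 hs).2]

theorem det_one_sub_eq_tsum (A : Matrix ι ι ℝ) :
    (1 - A).det = ∑' m : ℕ, (-1) ^ m / m ! * ∑ p : Fin m → ι, (A.submatrix p p).det := by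
  have hterm (m : ℕ) : (-1) ^ m / m ! * ∑ p : Fin m → ι, (A.submatrix p p).det = (-1) ^ m *
      ∑ s ∈ univ.powersetCard m, (A.submatrix (Subtype.val : s → ι) Subtype.val).det := by
    rw [sum_det_submatrix_eq_factorial_mul]
    field_simp
  rw [tsum_congr hterm, tsum_eq_sum (s := range (Fintype.card ι + 1)) fun m hm => ?_,
    det_one_sub_eq_sum_range_minors]
  rw [powersetCard_eq_empty.2 (by simpa [Nat.lt_succ_iff] using hm), sum_empty, mul_zero]

end PrincipalMinors

variable {ι : Type*} [Fintype ι]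

theorem PosSemidef.det_le_pow_of_diag_le [DecidableEq ι] {M : Matrix ι ι ℝ} (hM : M.PosSemidef)
    {c : ℝ} (hc : ∀ i, M i i ≤ c) : M.det ≤ c ^ Fintype.card ι := by
  rcases isEmpty_or_nonempty ι with hι | hι
  · simp
  have heig := hM.eigenvalues_nonneg
  have hdet : M.det = ∏ i, hM.1.eigenvalues i := by simpa using hM.1.det_eq_prod_eigenvalues
  have hmean : (∑ i, hM.1.eigenvalues i) / Fintype.card ι ≤ c := by
    have htrace : M.trace = ∑ i, hM.1.eigenvalues i := by
      simpa using hM.1.trace_eq_sum_eigenvalues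
    rw [← htrace, div_le_iff₀' (by exact_mod_cast Fintype.card_pos)]
    simpa [Matrix.trace] using sum_le_sum fun i (_ : i ∈ univ) => hc i
  calc M.det ≤ ((∑ i, hM.1.eigenvalues i) / Fintype.card ι) ^ Fintype.card ι := by
        simpa [hdet] using Real.prod_le_sum_div_card_pow fun i (_ : i ∈ univ) => heig i
    _ ≤ c ^ Fintype.card ι :=
        pow_le_pow_left₀ (div_nonneg (sum_nonneg fun i _ => heig i) (Nat.cast_nonneg _)) hmean _

theorem posSemidef_of_integral_mul {X : Type*} [MeasurableSpace X] (μ : Measure X)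
    {u : ι → X → ℝ} (hu : ∀ i j, Integrable (fun t => u i t * u j t) μ) :
    (of fun i j => ∫ t, u i t * u j t ∂μ).PosSemidef := by
  refine .of_dotProduct_mulVec_nonneg ?_ fun v => ?_
  · ext i j
    simp only [conjTranspose_apply, of_apply, star_trivial, mul_comm]
  have hint (i j : ι) : Integrable (fun t => v i * u i t * (v j * u j t)) μ :=
    (hu i j).const_mul (v i * v j) |>.congr (.of_forall fun t => by ring)
  have hquad : star v ⬝ᵥ (of fun i j => ∫ t, u i t * u j t ∂μ) *ᵥ v =
      ∫ t, (∑ i, v i * u i t) ^ 2 ∂μ := by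
    simp_rw [sq, sum_mul_sum, dotProduct, mulVec, dotProduct, star_trivial, of_apply, mul_sum]
    rw [integral_finsetSum _ fun i _ => integrable_finsetSum _ fun j _ => hint i j]
    refine sum_congr rfl fun i _ => ?_
    rw [integral_finsetSum _ fun j _ => hint i j]
    refine sum_congr rfl fun j _ => ?_
    rw [mul_comm, mul_assoc, ← integral_mul_const]
    congr 1
    ext t
    ring
  exact hquad ▸ integral_nonneg fun t => sq_nonneg _

end Matrix

section RiemannSum

open Set
open scoped Function

variable {ι : Type*} {α : ℝ} {n : ℕ}

noncomputable def gridInterval (α : ℝ) (n j : ℕ) : Set ℝ := Ico (α * j / n) (α * (j + 1) / n)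

noncomputable def gridCell (α : ℝ) (n : ℕ) (p : ι → Fin n) : Set (ι → ℝ) :=
  univ.pi fun a => gridInterval α n (p a)

noncomputable def midpointNode (α : ℝ) (n j : ℕ) : ℝ := α * (j + 1 / 2) / n

noncomputable def gridMidpoint (α : ℝ) (n : ℕ) (p : ι → Fin n) : ι → ℝ :=
  fun a => midpointNode α n (p a)

noncomputable def midpointRiemannSum [Fintype ι] [DecidableEq ι] (α : ℝ) (n : ℕ)
    (f : (ι → ℝ) → ℝ) : ℝ :=
  (α / n) ^ Fintype.card ι * ∑ p : ι → Fin n, f (gridMidpoint α n p)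

theorem volume_gridInterval (j : ℕ) : volume (gridInterval α n j) = ENNReal.ofReal (α / n) := by
  rw [gridInterval, Real.volume_Ico]
  congr 1
  ring

theorem pairwise_disjoint_gridInterval (hα : 0 ≤ α) : Pairwise (Disjoint on gridInterval α n) := by
  have hmono : Monotone fun j : ℕ => α * j / n := by
    intro i j hij
    dsimp only
    gcongr
  convert hmono.pairwise_disjoint_on_Ico_succ using 3 with j
  simp [gridInterval]

theorem iUnion_gridInterval (hα : 0 < α) (hn : 0 < n) :
    ⋃ j : Fin n, gridInterval α n j = Ico 0 α := by
  have hn' : (0 : ℝ) < n := by exact_mod_cast hn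
  ext x
  simp only [mem_iUnion, gridInterval, mem_Ico]
  constructor
  · rintro ⟨j, hjx, hxj⟩
    have hj : ((j : ℕ) : ℝ) + 1 ≤ n := by exact_mod_cast j.2
    refine ⟨le_trans (by positivity) hjx, hxj.trans_le ?_⟩
    rw [div_le_iff₀ hn']
    nlinarith
  · rintro ⟨hx0, hxα⟩
    have hy : 0 ≤ x * n / α := by positivity
    refine ⟨⟨⌊x * n / α⌋₊, (Nat.floor_lt hy).2 ?_⟩, ?_, ?_⟩
    · rw [div_lt_iff₀ hα]
      nlinarith
    · rw [div_le_iff₀ hn', ← le_div_iff₀' hα]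
      exact Nat.floor_le hy
    · rw [lt_div_iff₀ hn', ← div_lt_iff₀' hα]
      exact Nat.lt_floor_add_one _

theorem gridMidpoint_mem_gridCell (hα : 0 < α) (p : ι → Fin n) :
    gridMidpoint α n p ∈ gridCell α n p := fun a _ => by
  have hn : (0 : ℝ) < n := by exact_mod_cast (p a).pos
  constructor <;> (simp only [gridMidpoint, midpointNode]; gcongr; linarith)

theorem volume_gridCell [Fintype ι] (p : ι → Fin n) :
    volume (gridCell α n p) = ENNReal.ofReal (α / n) ^ Fintype.card ι := by
  simp [gridCell, volume_pi_pi, volume_gridInterval]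

theorem gridCell_subset_pi_Icc (hα : 0 ≤ α) (p : ι → Fin n) :
    gridCell α n p ⊆ univ.pi fun _ => Icc 0 α := fun x hx a _ => by
  obtain ⟨h₁, h₂⟩ := hx a (mem_univ a)
  have hn : (0 : ℝ) < n := by exact_mod_cast (p a).pos
  have hj : ((p a : ℕ) : ℝ) + 1 ≤ n := by exact_mod_cast (p a).2
  refine ⟨le_trans (by positivity) h₁, h₂.le.trans ?_⟩
  rw [div_le_iff₀ hn]
  nlinarith

theorem iUnion_gridCell (hα : 0 < α) (hn : 0 < n) :
    ⋃ p : ι → Fin n, gridCell α n p = univ.pi fun _ => Ico 0 α := by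
  rw [← iUnion_gridInterval hα hn, ← iUnion_univ_pi fun _ (j : Fin n) => gridInterval α n j]
  rfl

theorem pairwise_disjoint_gridCell (hα : 0 ≤ α) :
    Pairwise (Disjoint on (gridCell α n : (ι → Fin n) → Set (ι → ℝ))) := fun p q hpq => by
  obtain ⟨a, ha⟩ := Function.ne_iff.1 hpq
  exact disjoint_univ_pi.2 ⟨a, pairwise_disjoint_gridInterval hα (Fin.val_injective.ne ha)⟩

theorem dist_gridMidpoint_le [Fintype ι] (hα : 0 ≤ α) {p : ι → Fin n} {x : ι → ℝ}
    (hx : x ∈ gridCell α n p) : dist x (gridMidpoint α n p) ≤ α / n := by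
  refine (dist_pi_le_iff (by positivity)).2 fun a => ?_
  obtain ⟨h₁, h₂⟩ := hx a (mem_univ a)
  have hmid : α * ((p a : ℕ) + 1 / 2) / n = α * (p a : ℕ) / n + α / n / 2 := by ring
  have hend : α * ((p a : ℕ) + 1) / n = α * (p a : ℕ) / n + α / n := by ring
  rw [Real.dist_eq, abs_le, gridMidpoint, midpointNode, hmid]
  have : 0 ≤ α / n := by positivity
  constructor <;> linarith

theorem card_fun_mul_div_pow [Fintype ι] [DecidableEq ι] (hn : 0 < n) :
    (Fintype.card (ι → Fin n) : ℝ) * (α / n) ^ Fintype.card ι = α ^ Fintype.card ι := by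
  have : (n : ℝ) ≠ 0 := by positivity
  rw [Fintype.card_fun, Fintype.card_fin, Nat.cast_pow, div_pow]
  field_simp

theorem integral_pi_Icc_eq_sum_gridCell [Fintype ι] [DecidableEq ι] (hα : 0 < α) (hn : 0 < n)
    {f : (ι → ℝ) → ℝ} (hf : IntegrableOn f (univ.pi fun _ => Icc 0 α)) :
    ∫ x in univ.pi (fun _ => Icc 0 α), f x = ∑ p : ι → Fin n, ∫ x in gridCell α n p, f x := by
  have hae : (univ.pi fun _ : ι => Icc (0 : ℝ) α) =ᵐ[volume] univ.pi fun _ => Ico 0 α :=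
    Measure.pi_Ico_ae_eq_pi_Icc.symm
  rw [setIntegral_congr_set hae, ← iUnion_gridCell hα hn,
    integral_iUnion_fintype (s := gridCell α n)
      (fun p => MeasurableSet.univ_pi fun _ => measurableSet_Ico) (pairwise_disjoint_gridCell hα.le)
      (fun p => hf.mono_set (gridCell_subset_pi_Icc hα.le p))]

theorem abs_midpointRiemannSum_sub_integral_le [Fintype ι] [DecidableEq ι] (hα : 0 < α)
    (hn : 0 < n) {f : (ι → ℝ) → ℝ} (hf : IntegrableOn f (univ.pi fun _ => Icc 0 α)) {ω : ℝ}
    (hω : ∀ p, ∀ x ∈ gridCell α n p, |f x - f (gridMidpoint α n p)| ≤ ω) :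
    |midpointRiemannSum α n f - ∫ x in univ.pi (fun _ => Icc 0 α), f x| ≤
      ω * α ^ Fintype.card ι := by
  have hvol (p : ι → Fin n) : volume.real (gridCell α n p) = (α / n) ^ Fintype.card ι := by
    rw [measureReal_def, volume_gridCell, ENNReal.toReal_pow,
      ENNReal.toReal_ofReal (by positivity)]
  have hcell (p : ι → Fin n) :
      |(∫ x in gridCell α n p, f x) - (α / n) ^ Fintype.card ι * f (gridMidpoint α n p)| ≤
        ω * (α / n) ^ Fintype.card ι := by
    have hfin : volume (gridCell α n p) < ⊤ := by simp [volume_gridCell]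
    rw [← hvol p, ← smul_eq_mul, ← setIntegral_const (f (gridMidpoint α n p)), ← integral_sub
      (hf.mono_set (gridCell_subset_pi_Icc hα.le p)) (integrableOn_const hfin.ne)]
    exact norm_setIntegral_le_of_norm_le_const (f := fun x => f x - f (gridMidpoint α n p)) hfin
      (hω p)
  rw [midpointRiemannSum, integral_pi_Icc_eq_sum_gridCell hα hn hf, Finset.mul_sum, abs_sub_comm,
    ← Finset.sum_sub_distrib]
  calc _ ≤ ∑ p : ι → Fin n, ω * (α / n) ^ Fintype.card ι :=
        (Finset.abs_sum_le_sum_abs _ _).trans (Finset.sum_le_sum fun p _ => hcell p)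
    _ = ω * α ^ Fintype.card ι := by
        rw [Finset.sum_const, Finset.card_univ, nsmul_eq_mul, mul_left_comm,
          card_fun_mul_div_pow hn]

theorem abs_midpointRiemannSum_le [Fintype ι] [DecidableEq ι] (hα : 0 ≤ α) (hn : 0 < n)
    {f : (ι → ℝ) → ℝ} {B : ℝ} (hf : ∀ x, |f x| ≤ B) :
    |midpointRiemannSum α n f| ≤ α ^ Fintype.card ι * B := by
  rw [midpointRiemannSum, abs_mul, abs_of_nonneg (by positivity)]
  calc _ ≤ (α / n) ^ Fintype.card ι * ∑ _p : ι → Fin n, B := by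
        gcongr
        exact (Finset.abs_sum_le_sum_abs _ _).trans (Finset.sum_le_sum fun p _ => hf _)
    _ = α ^ Fintype.card ι * B := by
        rw [Finset.sum_const, Finset.card_univ, nsmul_eq_mul, ← mul_assoc,
          mul_comm ((α / n) ^ _), card_fun_mul_div_pow hn]

theorem tendsto_midpointRiemannSum [Fintype ι] [DecidableEq ι] (hα : 0 < α) {f : (ι → ℝ) → ℝ}
    (hf : ContinuousOn f (univ.pi fun _ => Icc 0 α)) :
    Tendsto (fun n => midpointRiemannSum α n f) atTop
      (nhds (∫ x in univ.pi (fun _ => Icc 0 α), f x)) := by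
  have hK : IsCompact (univ.pi fun _ : ι => Icc 0 α) := isCompact_univ_pi fun _ => isCompact_Icc
  rw [Metric.tendsto_atTop]
  intro ε hε
  set ω := ε / (α ^ Fintype.card ι + 1)
  obtain ⟨δ, hδ, hδf⟩ := Metric.uniformContinuousOn_iff.1
    (hK.uniformContinuousOn_of_continuous hf) ω (by positivity)
  obtain ⟨N, hN⟩ := exists_nat_gt (α / δ)
  refine ⟨N + 1, fun n hNn => ?_⟩
  have hn : 0 < n := by omega
  have hαn : α / n < δ := by
    have : (N : ℝ) + 1 ≤ n := by exact_mod_cast hNn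
    rw [div_lt_iff₀ hδ] at hN
    rw [div_lt_iff₀ (by positivity)]
    nlinarith
  have hω (p : ι → Fin n) (x) (hx : x ∈ gridCell α n p) : |f x - f (gridMidpoint α n p)| ≤ ω :=
    (hδf x (gridCell_subset_pi_Icc hα.le p hx) _
      (gridCell_subset_pi_Icc hα.le p (gridMidpoint_mem_gridCell hα p))
      ((dist_gridMidpoint_le hα.le hx).trans_lt hαn)).le
  rw [Real.dist_eq]
  calc _ ≤ ω * α ^ Fintype.card ι :=
        abs_midpointRiemannSum_sub_integral_le hα hn (hf.integrableOn_compact hK) hω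
    _ < ε := by
        rw [div_mul_eq_mul_div, div_lt_iff₀ (by positivity)]
        nlinarith

end RiemannSum

open scoped Nat in
theorem tendsto_det_one_sub_midpointNystrom {α : ℝ} (hα : 0 < α) {k : ℝ → ℝ → ℝ}
    (hk : Continuous (Function.uncurry k)) {C : ℝ}
    (hC : ∀ (m : ℕ) (x : Fin m → ℝ), |(Matrix.of fun i j => k (x i) (x j)).det| ≤ C ^ m) :
    Tendsto (fun n : ℕ => (1 - Matrix.of fun j l : Fin n =>
        α / n * k (midpointNode α n j) (midpointNode α n l)).det) atTop
      (nhds (fredholmDet α k)) := by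
  let F (m : ℕ) (x : Fin m → ℝ) : ℝ := (Matrix.of fun i j => k (x i) (x j)).det
  have hF (m : ℕ) : Continuous (F m) :=
    .matrix_det <| continuous_matrix fun i j =>
      hk.comp₂ (continuous_apply i) (continuous_apply j)
  have hterm (n m : ℕ) : ∑ p : Fin m → Fin n, ((Matrix.of fun j l : Fin n =>
      α / n * k (midpointNode α n j) (midpointNode α n l)).submatrix p p).det =
        midpointRiemannSum α n (F m) := by
    rw [midpointRiemannSum, Finset.mul_sum]
    refine Finset.sum_congr rfl fun p _ => ?_
    exact Matrix.det_smul (Matrix.of fun a b => k (gridMidpoint α n p a) (gridMidpoint α n p b)) _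
  simp_rw [Matrix.det_one_sub_eq_tsum, hterm]
  refine tendsto_tsum_of_dominated_convergence (bound := fun m => (α * C) ^ m / m !)
    (Real.summable_pow_div_factorial _)
    (fun m => (tendsto_midpointRiemannSum hα (hF m).continuousOn).const_mul _) ?_
  filter_upwards [eventually_gt_atTop 0] with n hn m
  rw [norm_mul, norm_div, norm_pow, norm_neg, norm_one, one_pow, Real.norm_natCast,
    Real.norm_eq_abs, mul_pow, one_div_mul_eq_div]
  gcongr
  simpa only [Fintype.card_fin] using abs_midpointRiemannSum_le hα.le hn (f := F m) (hC m)

section SineKernel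

open Real

theorem Real.sinc_eq_integral_cos (x : ℝ) : sinc x = ∫ t in (0 : ℝ)..1, cos (t * x) := by
  rcases eq_or_ne x 0 with rfl | hx
  · simp
  rw [intervalIntegral.integral_comp_mul_right cos hx, integral_cos, sinc_of_ne_zero hx]
  simp [div_eq_inv_mul]

theorem sineK_eq_sinc_div_pi (x : ℝ) : sineK x = sinc x / π := by
  rcases eq_or_ne x 0 with rfl | hx
  · simp [sineK]
  rw [sineK, if_neg hx, sinc_of_ne_zero hx, div_div, mul_comm]

theorem continuous_sineK : Continuous sineK := by
  simpa only [funext sineK_eq_sinc_div_pi] using continuous_sinc.div_const π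

theorem intervalIntegrable_cos_mul (c : ℝ) :
    IntervalIntegrable (fun t => cos (t * c)) volume 0 1 := by
  apply Continuous.intervalIntegrable
  fun_prop

theorem sineK_sub_add_sineK_add (a b : ℝ) :
    sineK (a - b) + sineK (a + b) = 2 / π * ∫ t in (0 : ℝ)..1, cos (t * a) * cos (t * b) := by
  have h (t : ℝ) : cos (t * a) * cos (t * b) = (cos (t * (a - b)) + cos (t * (a + b))) / 2 := by
    rw [mul_sub, mul_add, cos_sub, cos_add]; ring
  simp_rw [h, intervalIntegral.integral_div, intervalIntegral.integral_add
    (intervalIntegrable_cos_mul _) (intervalIntegrable_cos_mul _), sineK_eq_sinc_div_pi,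
    sinc_eq_integral_cos]
  ring

theorem sineK_sub_sub_sineK_add (a b : ℝ) :
    sineK (a - b) - sineK (a + b) = 2 / π * ∫ t in (0 : ℝ)..1, sin (t * a) * sin (t * b) := by
  have h (t : ℝ) : sin (t * a) * sin (t * b) = (cos (t * (a - b)) - cos (t * (a + b))) / 2 := by
    rw [mul_sub, mul_add, cos_sub, cos_add]; ring
  simp_rw [h, intervalIntegral.integral_div, intervalIntegral.integral_sub
    (intervalIntegrable_cos_mul _) (intervalIntegrable_cos_mul _), sineK_eq_sinc_div_pi,
    sinc_eq_integral_cos]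
  ring

theorem exists_sineKernel_eq_integral {ε : ℝ} (hε : ε = 1 ∨ ε = -1) :
    ∃ φ : ℝ → ℝ, Continuous φ ∧ (∀ u, |φ u| ≤ 1) ∧ ∀ a b,
      sineK (a - b) + ε * sineK (a + b) = 2 / π * ∫ t in (0 : ℝ)..1, φ (t * a) * φ (t * b) := by
  rcases hε with rfl | rfl
  · exact ⟨cos, continuous_cos, abs_cos_le_one, fun a b => by
      rw [one_mul, sineK_sub_add_sineK_add]⟩
  · exact ⟨sin, continuous_sin, abs_sin_le_one, fun a b => by
      rw [neg_one_mul, ← sub_eq_add_neg, sineK_sub_sub_sineK_add]⟩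

theorem abs_det_integral_kernel_le {ι : Type*} [Fintype ι] [DecidableEq ι] {φ : ℝ → ℝ}
    (hφ : Continuous φ) (hφ1 : ∀ u, |φ u| ≤ 1) {c : ℝ} (hc : 0 ≤ c) (x : ι → ℝ) :
    |(Matrix.of fun i j => c * ∫ t in (0 : ℝ)..1, φ (t * x i) * φ (t * x j)).det| ≤
      c ^ Fintype.card ι := by
  set G : Matrix ι ι ℝ := Matrix.of fun i j => ∫ t in (0 : ℝ)..1, φ (t * x i) * φ (t * x j)
  have hint (i j : ι) : IntegrableOn (fun t => φ (t * x i) * φ (t * x j)) (Set.Ioc 0 1) := by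
    apply Continuous.integrableOn_Ioc
    fun_prop
  have hPSD : (c • G).PosSemidef := by
    refine .smul ?_ hc
    simpa only [G, intervalIntegral.integral_of_le zero_le_one] using
      Matrix.posSemidef_of_integral_mul _ hint
  have hdiag (i : ι) : (c • G) i i ≤ c := by
    have hsq : ‖∫ t in (0 : ℝ)..1, φ (t * x i) * φ (t * x i)‖ ≤ 1 * |1 - 0| :=
      intervalIntegral.norm_integral_le_of_norm_le_const fun t _ => by
        rw [Real.norm_eq_abs, abs_mul]
        exact mul_le_one₀ (hφ1 _) (abs_nonneg _) (hφ1 _)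
    change c * ∫ t in (0 : ℝ)..1, φ (t * x i) * φ (t * x i) ≤ c
    exact mul_le_of_le_one_right hc ((le_abs_self _).trans (by simpa using hsq))
  change |(c • G).det| ≤ _
  rw [abs_of_nonneg hPSD.det_nonneg]
  exact hPSD.det_le_pow_of_diag_le hdiag

theorem abs_det_sineKernel_le {ε : ℝ} (hε : ε = 1 ∨ ε = -1) (m : ℕ) (x : Fin m → ℝ) :
    |(Matrix.of fun i j => sineK (x i - x j) + ε * sineK (x i + x j)).det| ≤ (2 / π) ^ m := by
  obtain ⟨φ, hφ, hφ1, hrep⟩ := exists_sineKernel_eq_integral hε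
  simpa only [hrep, Fintype.card_fin] using
    abs_det_integral_kernel_le hφ hφ1 (by positivity : (0 : ℝ) ≤ 2 / π) x

end SineKernel

/-- The determinants of the Nyström discretizations I_n - A_n^± converge to the
    Fredholm determinant det(I - K_α^±) of the operator with kernel
    K(x-y) ± K(x+y), K(x) = sin(x)/(πx). -/
theorem stmt14 (α : ℝ) (hα : 0 < α) (ε : ℝ) (hε : ε = 1 ∨ ε = -1) :
    Tendsto (fun n : ℕ =>
      Matrix.det ((1 : Matrix (Fin n) (Fin n) ℝ) -
        Matrix.of fun j k : Fin n =>
          (α / n) * (sineK (α * (((j : ℕ) : ℝ) - ((k : ℕ) : ℝ)) / n) +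
            ε * sineK (α * (((j : ℕ) : ℝ) + ((k : ℕ) : ℝ) + 1) / n))))
      atTop
      (nhds (fredholmDet α (fun x y => sineK (x - y) + ε * sineK (x + y)))) := by
  have hk : Continuous (Function.uncurry fun x y => sineK (x - y) + ε * sineK (x + y)) :=
    (continuous_sineK.comp (continuous_fst.sub continuous_snd)).add
      (continuous_const.mul (continuous_sineK.comp (continuous_fst.add continuous_snd)))
  convert tendsto_det_one_sub_midpointNystrom hα hk (abs_det_sineKernel_le hε) using 5 with n
  ext j l
  -- `α (j - l) / n = x_j - x_l` and `α (j + l + 1) / n = x_j + x_l` for the midpoint nodes `x_j`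
  simp only [midpointNode]
  congr 4 <;> ring
end
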